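/- Let A be a bialgebra over a field k, g ∈ A a grouplike element, and x ∈ A with Δ(x) = x ⊗ 1 + g ⊗ x and g·x = q·x·g, where q ∈ k is a primitive N-th root of unity with N ≥ 2. Then x^N is again skew-primitive: Δ(x^N) = x^N ⊗ 1 + g^N ⊗ x^N. -/

import Mathlib

open TensorProduct Finset

section qBinom

variable {k : Type*} [CommRing k]

/-- Gaussian binomial coefficients, via one Pascal-type recurrence. -/
def qBinom (q : k) : ℕ → ℕ → k
  | _, 0 => 1
  | 0, _+1 => 0
  | n+1, j+1 => qBinom q n (j+1) + q ^ (n-j) * qBinom q n j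

@[simp] lemma qBinom_zero_right (q : k) (n : ℕ) : qBinom q n 0 = 1 := by
  cases n <;> rfl

lemma qBinom_succ_succ (q : k) (n j : ℕ) :
    qBinom q (n+1) (j+1) = qBinom q n (j+1) + q ^ (n-j) * qBinom q n j := rfl

lemma qBinom_eq_zero_of_lt (q : k) : ∀ {n j : ℕ}, n < j → qBinom q n j = 0 := by
  intro n
  induction n with
  | zero => intro j hj; match j, hj with | j+1, _ => rfl
  | succ n ih =>
    intro j hj
    match j, hj with
    | j+1, hj =>
      rw [qBinom_succ_succ, ih (by omega), ih (by omega), mul_zero, add_zero]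

@[simp] lemma qBinom_self (q : k) (n : ℕ) : qBinom q n n = 1 := by
  induction n with
  | zero => rfl
  | succ n ih =>
    rw [qBinom_succ_succ, ih, qBinom_eq_zero_of_lt q (Nat.lt_succ_self n),
      Nat.sub_self, pow_zero, one_mul, zero_add]

lemma qBinom_mul_prod (q : k) (n : ℕ) : ∀ j : ℕ,
    qBinom q n j * ∏ i ∈ range j, (q ^ (i+1) - 1) = ∏ i ∈ range j, (q ^ (n-i) - 1) := by
  induction n with
  | zero =>
    intro j
    cases j with
    | zero => simp
    | succ j =>
      rw [qBinom_eq_zero_of_lt q (Nat.succ_pos j), zero_mul]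
      exact (Finset.prod_eq_zero (Finset.mem_range.2 (Nat.succ_pos j)) (by simp)).symm
  | succ n ih =>
    intro j
    cases j with
    | zero => simp
    | succ j =>
      have hP : ∏ i ∈ range (j+1), (q ^ (i+1) - 1)
          = (∏ i ∈ range j, (q ^ (i+1) - 1)) * (q ^ (j+1) - 1) := prod_range_succ _ _
      have hshift : ∏ i ∈ range (j+1), (q ^ (n+1-i) - 1)
          = (∏ i ∈ range j, (q ^ (n-i) - 1)) * (q ^ (n+1) - 1) := by
        rw [Finset.prod_range_succ',
          Finset.prod_congr rfl (fun i (_ : i ∈ range j) =>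
            show q ^ (n+1-(i+1)) - 1 = q ^ (n-i) - 1 by
              rw [show n+1-(i+1) = n-i from by omega])]
        norm_num
      have key := ih (j+1)
      rw [prod_range_succ, prod_range_succ] at key
      have key' := ih j
      rw [qBinom_succ_succ, hP, hshift]
      by_cases hjn : j ≤ n
      · have hqq : q ^ (n-j) * q ^ (j+1) = q ^ (n+1) := by
          rw [← pow_add]; congr 1; omega
        linear_combination key + (q ^ (n-j) * (q ^ (j+1) - 1)) * key'
          + (∏ i ∈ range j, (q ^ (n-i) - 1)) * hqq
      · have hRj : ∏ i ∈ range j, (q ^ (n-i) - 1) = 0 :=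
          Finset.prod_eq_zero (i := n) (mem_range.2 (by omega)) (by simp)
        rw [qBinom_eq_zero_of_lt q (show n < j+1 by omega),
          qBinom_eq_zero_of_lt q (show n < j by omega), hRj]
        ring

end qBinom

section qpow

variable {k R : Type*} [CommRing k] [Ring R] [Algebra k R]

lemma q_semicomm_pow {q : k} {a b : R} (h : b * a = q • (a * b)) (m : ℕ) :
    b * a ^ m = q ^ m • (a ^ m * b) := by
  induction m with
  | zero => simp
  | succ m ih =>
    rw [pow_succ a, ← mul_assoc, ih, smul_mul_assoc, mul_assoc, h, mul_smul_comm,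
      smul_smul, ← mul_assoc, ← pow_succ a, ← pow_succ q]

/-- The q-binomial theorem for q-commuting elements. -/
theorem q_add_pow {q : k} {a b : R} (h : b * a = q • (a * b)) (n : ℕ) :
    (a + b) ^ n = ∑ j ∈ range (n+1), qBinom q n j • (a ^ (n-j) * b ^ j) := by
  rw [add_comm a b]
  let t : ℕ → ℕ → R := fun n j => qBinom q n j • (a ^ (n-j) * b ^ j)
  change (b + a) ^ n = ∑ j ∈ range (n+1), t n j
  have h_first : ∀ n, t n 0 = a ^ n := fun n => by
    simp only [t, qBinom_zero_right, one_smul, pow_zero, mul_one, Nat.sub_zero]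
  have h_last : ∀ n, t n (n+1) = 0 := fun n => by
    simp only [t, qBinom_eq_zero_of_lt q (Nat.lt_succ_self n), zero_smul]
  have h_middle : ∀ n i : ℕ, i ∈ range (n+1) →
      t (n+1) (i+1) = b * t n i + a * t n (i+1) := by
    intro n i h_mem
    have h_le : i ≤ n := Nat.lt_succ_iff.mp (mem_range.mp h_mem)
    have hb : b * t n i = (q ^ (n-i) * qBinom q n i) • (a ^ (n-i) * b ^ (i+1)) := by
      simp only [t, mul_smul_comm]
      rw [← mul_assoc, q_semicomm_pow h, smul_mul_assoc, mul_assoc, ← pow_succ' b,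
        smul_smul, mul_comm (qBinom q n i)]
    have ha : a * t n (i+1) = qBinom q n (i+1) • (a ^ (n-i) * b ^ (i+1)) := by
      simp only [t, mul_smul_comm]
      by_cases hin : i = n
      · rw [hin, qBinom_eq_zero_of_lt q (Nat.lt_succ_self n), zero_smul, zero_smul]
      · have hni : n - (i+1) + 1 = n - i := by omega
        rw [← mul_assoc, ← pow_succ' a, hni]
    rw [hb, ha]
    show qBinom q (n+1) (i+1) • (a ^ (n+1-(i+1)) * b ^ (i+1)) = _
    rw [qBinom_succ_succ, add_smul, Nat.succ_sub_succ]
    exact add_comm _ _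
  induction n with
  | zero => simp [t]
  | succ n ih =>
    rw [sum_range_succ', h_first, sum_congr rfl (h_middle n), sum_add_distrib, add_assoc,
      pow_succ' (b + a), ih, add_mul, mul_sum, mul_sum]
    congr 1
    rw [sum_range_succ', sum_range_succ, h_first, h_last, mul_zero, add_zero,
      _root_.pow_succ']

end qpow

lemma qBinom_primRoot_eq_zero {k : Type*} [Field k] {q : k} {N : ℕ}
    (hq : IsPrimitiveRoot q N) {j : ℕ} (h0 : 0 < j) (hjN : j < N) :
    qBinom q N j = 0 := by
  have h := qBinom_mul_prod q N j
  have hz : ∏ i ∈ range j, (q ^ (N-i) - 1) = 0 :=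
    Finset.prod_eq_zero (Finset.mem_range.2 h0) (by simp [hq.pow_eq_one])
  rw [hz] at h
  have hne : ∏ i ∈ range j, (q ^ (i+1) - 1) ≠ 0 := by
    refine Finset.prod_ne_zero_iff.2 fun i hi => sub_ne_zero.2 ?_
    exact hq.pow_ne_one_of_pos_of_lt (Nat.succ_ne_zero i)
      (by have := Finset.mem_range.1 hi; omega)
  exact (mul_eq_zero.1 h).resolve_right hne

/-- If `A` is a bialgebra, `g` grouplike, `Δ(x) = x ⊗ 1 + g ⊗ x` and `g·x = q·x·g` with
`q` a primitive `N`-th root of unity, `N ≥ 2`, then `x^N` is again skew-primitive: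
`Δ(x^N) = x^N ⊗ 1 + g^N ⊗ x^N`. -/
theorem pow_skewPrimitive_of_primitiveRoot {k A : Type*} [Field k] [Ring A] [Bialgebra k A]
    (g x : A) (q : k) (N : ℕ) (hN : 2 ≤ N) (hq : IsPrimitiveRoot q N)
    (hg : Coalgebra.comul g = g ⊗ₜ[k] g) (hgε : Coalgebra.counit g = (1 : k))
    (hx : Coalgebra.comul x = x ⊗ₜ[k] (1 : A) + g ⊗ₜ[k] x)
    (hgx : g * x = q • (x * g)) :
    Coalgebra.comul (x ^ N) = (x ^ N) ⊗ₜ[k] (1 : A) + (g ^ N) ⊗ₜ[k] (x ^ N) := by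
  set a : A ⊗[k] A := x ⊗ₜ[k] (1 : A) with ha
  set b : A ⊗[k] A := g ⊗ₜ[k] x with hb
  have hba : b * a = q • (a * b) := by
    rw [ha, hb, Algebra.TensorProduct.tmul_mul_tmul, Algebra.TensorProduct.tmul_mul_tmul,
      hgx, mul_one, one_mul, TensorProduct.smul_tmul']
  rw [Bialgebra.comul_pow, hx, q_add_pow hba N, Finset.sum_range_succ,
    Finset.sum_eq_single_of_mem 0 (Finset.mem_range.2 (by omega))
      (fun j hj hj0 => by
        rw [qBinom_primRoot_eq_zero hq (Nat.pos_of_ne_zero hj0) (Finset.mem_range.1 hj),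
          zero_smul])]
  rw [qBinom_zero_right, qBinom_self, one_smul, one_smul, pow_zero, mul_one, Nat.sub_zero,
    Nat.sub_self, pow_zero, one_mul, ha, hb, Algebra.TensorProduct.tmul_pow,
    Algebra.TensorProduct.tmul_pow, one_pow]
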